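/- arXiv:math/9803070 — 2 statements merged into one kernel-verified Lean document; each statement's English description precedes it below -/
import Mathlib

section
/- The maps σ and φ satisfy the additional condition of the braided quantum group definition: (σ ⊗ id ⊗ id)(id ⊗ φ ⊗ id)(σ⁻¹ ⊗ id)(id ⊗ φ) = (id ⊗ id ⊗ σ)(id ⊗ φ ⊗ id)(id ⊗ σ⁻¹)(φ ⊗ id), as k-linear maps U ⊗_k U → U ⊗_k U ⊗_k U ⊗_k U. -/
open scoped TensorProduct

/-- The Cartan matrix of type `A_n`. -/
def cartanA (n : ℕ) (i j : Fin n) : ℤ :=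
  if i = j then 2
  else if (i : ℕ) + 1 = (j : ℕ) ∨ (j : ℕ) + 1 = (i : ℕ) then -1
  else 0

/-- For `α, γ ∈ ℕⁿ`, `c(α,γ) = ∑_{i,j} a_{ij} α_i γ_j` with `A` the Cartan matrix
of type `A_n`. -/
def cpair {n : ℕ} (α γ : Fin n → ℕ) : ℤ :=
  ∑ i : Fin n, ∑ j : Fin n, cartanA n i j * (α i : ℤ) * (γ j : ℤ)

/-- The quantum Serre relations of type `A_n` hold for the family `y`. -/
def serreCond (k : Type) [CommRing k] (q : kˣ) {n : ℕ} {B : Type} [Ring B] [Algebra k B]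
    (y : Fin n → B) : Prop :=
  (∀ i j : Fin n, 1 < |((i : ℕ) : ℤ) - ((j : ℕ) : ℤ)| → y i * y j = y j * y i) ∧
  (∀ i j : Fin n, |((i : ℕ) : ℤ) - ((j : ℕ) : ℤ)| = 1 →
    y i ^ 2 * y j - ((q : k) + ((q⁻¹ : kˣ) : k)) • (y i * y j * y i) + y j * y i ^ 2 = 0)

/-- `U`, with distinguished generators `x`, is a presentation of `U_q^+(sl_{n+1})`:
the quotient of the free associative unital `k`-algebra on `x_1, …, x_n` by the
two-sided ideal generated by the quantum Serre relations.  This is expressed by: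
the relations hold in `U`, the `x i` generate `U`, and `U` has the corresponding
universal (lifting) property. -/
def IsUqPlus (k : Type) [CommRing k] (q : kˣ) {n : ℕ} (U : Type) [Ring U] [Algebra k U]
    (x : Fin n → U) : Prop :=
  serreCond k q x ∧ Algebra.adjoin k (Set.range x) = ⊤ ∧
    ∀ (B : Type) [Ring B] [Algebra k B] (y : Fin n → B),
      serreCond k q y → ∃ f : U →ₐ[k] B, ∀ i, f (x i) = y i

/-- The map `s ⊗ id` acting on the first two factors of `V ⊗ (V ⊗ V)`. -/
noncomputable def map12 (k V : Type) [CommRing k] [AddCommGroup V] [Module k V]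
    (s : V ⊗[k] V →ₗ[k] V ⊗[k] V) :
    V ⊗[k] (V ⊗[k] V) →ₗ[k] V ⊗[k] (V ⊗[k] V) :=
  (TensorProduct.assoc k V V V).toLinearMap ∘ₗ (TensorProduct.map s LinearMap.id) ∘ₗ
    (TensorProduct.assoc k V V V).symm.toLinearMap

/-- The map `f ⊗ id : V ⊗ V → V ⊗ V ⊗ V` (right-nested), for `f : V → V ⊗ V`. -/
noncomputable def mapFst (k V : Type) [CommRing k] [AddCommGroup V] [Module k V]
    (f : V →ₗ[k] V ⊗[k] V) :
    V ⊗[k] V →ₗ[k] V ⊗[k] (V ⊗[k] V) :=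
  (TensorProduct.assoc k V V V).toLinearMap ∘ₗ TensorProduct.map f LinearMap.id

/-- The map `s ⊗ id ⊗ id` acting on the first two factors of `V ⊗ (V ⊗ (V ⊗ V))`. -/
noncomputable def map12of4 (k V : Type) [CommRing k] [AddCommGroup V] [Module k V]
    (s : V ⊗[k] V →ₗ[k] V ⊗[k] V) :
    V ⊗[k] (V ⊗[k] (V ⊗[k] V)) →ₗ[k] V ⊗[k] (V ⊗[k] (V ⊗[k] V)) :=
  (TensorProduct.assoc k V V (V ⊗[k] V)).toLinearMap ∘ₗ (TensorProduct.map s LinearMap.id) ∘ₗ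
    (TensorProduct.assoc k V V (V ⊗[k] V)).symm.toLinearMap

/-! Write `φ a = ∑ a₁ ⊗ a₂` and `φ b = ∑ b₁ ⊗ b₂` for homogeneous `a, b`. Both sides send `a ⊗ b`
to `∑ a₁ ⊗ σ⁻¹(a₂ ⊗ b₁) ⊗ b₂`: on the left `σ` moves `b₁` back across `a₁` after `σ⁻¹` moved it
across all of `a`, on the right symmetrically for `a₂` and `b₂`, and the scalars cancel because
`c` is biadditive and `φ` preserves total degree. The latter holds on the generators `x i` and
propagates to all of `U` since `φ` is multiplicative into `U ⊗_σ U`, whose product adds degrees. -/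

lemma cpair_add_left {n : ℕ} (α α' γ : Fin n → ℕ) :
    cpair (α + α') γ = cpair α γ + cpair α' γ := by
  simp only [cpair, Pi.add_apply, Nat.cast_add, mul_add, add_mul, Finset.sum_add_distrib]

lemma cpair_add_right {n : ℕ} (α γ γ' : Fin n → ℕ) :
    cpair α (γ + γ') = cpair α γ + cpair α γ' := by
  simp only [cpair, Pi.add_apply, Nat.cast_add, mul_add, Finset.sum_add_distrib]

namespace DirectSum.Decomposition

variable {ι R M : Type*} [DecidableEq ι]

theorem le_of_iSup_eq_top [Semiring R] [AddCommMonoid M] [Module R M]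
    (ℳ 𝒞 : ι → Submodule R M) [Decomposition ℳ]
    (h𝒞 : ∀ i, 𝒞 i ≤ ℳ i) (htop : ⨆ i, 𝒞 i = ⊤) (i : ι) : ℳ i ≤ 𝒞 i := by
  intro m hm
  have hcomp : (decompose ℳ m i : M) ∈ 𝒞 i := by
    refine Submodule.iSup_induction 𝒞 (motive := fun x ↦ (decompose ℳ x i : M) ∈ 𝒞 i)
      (htop ▸ Submodule.mem_top) (fun j y hy ↦ ?_) (by simp) fun y z hy hz ↦ by
        simpa using add_mem hy hz
    by_cases hji : j = i
    · subst hji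
      rwa [decompose_of_mem_same ℳ (h𝒞 j hy)]
    · rw [decompose_of_mem_ne ℳ (h𝒞 j hy) hji]
      exact zero_mem _
  rwa [decompose_of_mem_same ℳ hm] at hcomp

theorem tensorProduct_ext {ι' N P : Type*} [DecidableEq ι'] [CommSemiring R]
    [AddCommMonoid M] [Module R M] [AddCommMonoid N] [Module R N] [AddCommMonoid P] [Module R P]
    (ℳ : ι → Submodule R M) (𝒩 : ι' → Submodule R N) [Decomposition ℳ] [Decomposition 𝒩]
    {f g : M ⊗[R] N →ₗ[R] P}
    (h : ∀ i j m n, m ∈ ℳ i → n ∈ 𝒩 j → f (m ⊗ₜ n) = g (m ⊗ₜ n)) : f = g := by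
  refine TensorProduct.ext' fun m n ↦ ?_
  induction m using Decomposition.inductionOn ℳ with
  | zero => simp
  | add m m' hm hm' => simp only [TensorProduct.add_tmul, map_add, hm, hm']
  | homogeneous m =>
    induction n using Decomposition.inductionOn 𝒩 with
    | zero => simp
    | add n n' hn hn' => simp only [TensorProduct.tmul_add, map_add, hn, hn']
    | homogeneous n => exact h _ _ _ _ m.2 n.2

end DirectSum.Decomposition

theorem Submodule.iSup_eq_top_of_adjoin_eq_top {ι R A : Type*} [DecidableEq ι] [AddMonoid ι]
    [CommSemiring R] [Semiring A] [Algebra R A] (𝒞 : ι → Submodule R A) [SetLike.GradedMonoid 𝒞]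
    {s : Set A}
    (hs : Algebra.adjoin R s = ⊤) (hs𝒞 : s ⊆ (⨆ i, 𝒞 i : Submodule R A)) : ⨆ i, 𝒞 i = ⊤ := by
  rw [Submodule.iSup_eq_toSubmodule_range] at hs𝒞 ⊢
  have hrange : (DirectSum.coeAlgHom 𝒞).range = ⊤ := top_le_iff.mp (hs ▸ Algebra.adjoin_le hs𝒞)
  rw [hrange, Algebra.top_toSubmodule]

theorem map_mem_of_adjoin_eq_top {ι R A V : Type*} [DecidableEq ι] [AddMonoid ι]
    [CommSemiring R] [Semiring A] [Algebra R A] [AddCommMonoid V] [Module R V]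
    (𝒜 : ι → Submodule R A) [GradedAlgebra 𝒜] (T : ι → Submodule R V) (φ : A →ₗ[R] V)
    (μ : V → V → V) (hμ : ∀ {β γ u v}, u ∈ T β → v ∈ T γ → μ u v ∈ T (β + γ))
    (hφ1 : φ 1 ∈ T 0) (hφmul : ∀ a b, φ (a * b) = μ (φ a) (φ b)) {s : Set A}
    (hs : Algebra.adjoin R s = ⊤) (hsφ : ∀ x ∈ s, ∃ α, x ∈ 𝒜 α ∧ φ x ∈ T α)
    {α : ι} {a : A} (ha : a ∈ 𝒜 α) : φ a ∈ T α := by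
  let 𝒞 : ι → Submodule R A := fun β ↦ 𝒜 β ⊓ (T β).comap φ
  have : SetLike.GradedMonoid 𝒞 :=
    { one_mem := ⟨SetLike.one_mem_graded 𝒜, hφ1⟩
      mul_mem := fun _ _ _ _ ha hb ↦
        ⟨SetLike.mul_mem_graded ha.1 hb.1, by simpa [hφmul] using hμ ha.2 hb.2⟩ }
  have htop : ⨆ β, 𝒞 β = ⊤ := Submodule.iSup_eq_top_of_adjoin_eq_top 𝒞 hs fun x hx ↦
    let ⟨β, hxβ, hφx⟩ := hsφ x hx
    Submodule.mem_iSup_of_mem β (Submodule.mem_inf.mpr ⟨hxβ, hφx⟩)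
  exact (DirectSum.Decomposition.le_of_iSup_eq_top 𝒜 𝒞 (fun _ ↦ inf_le_left) htop α ha).2

open TensorProduct

section TensorGrade

variable {ι R M : Type*} [CommSemiring R]

def tensorGrade [Add ι] [AddCommMonoid M] [Module R M] (𝒜 : ι → Submodule R M) (δ : ι) :
    Submodule R (M ⊗[R] M) :=
  Submodule.span R {z | ∃ β γ u v, β + γ = δ ∧ u ∈ 𝒜 β ∧ v ∈ 𝒜 γ ∧ z = u ⊗ₜ[R] v}

theorem tmul_mem_tensorGrade [Add ι] [AddCommMonoid M] [Module R M] {𝒜 : ι → Submodule R M}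
    {β γ : ι} {u v : M} (hu : u ∈ 𝒜 β) (hv : v ∈ 𝒜 γ) : u ⊗ₜ[R] v ∈ tensorGrade 𝒜 (β + γ) :=
  Submodule.subset_span ⟨β, γ, u, v, rfl, hu, hv, rfl⟩

theorem mul_mem_tensorGrade [AddCommMonoid ι] [Semiring M] [Algebra R M]
    {𝒜 : ι → Submodule R M} [SetLike.GradedMonoid 𝒜] (χ : ι → ι → R)
    {μ : M ⊗[R] M →ₗ[R] M ⊗[R] M →ₗ[R] M ⊗[R] M}
    (hμ : ∀ α γ b c, b ∈ 𝒜 α → c ∈ 𝒜 γ → ∀ a d,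
      μ (a ⊗ₜ[R] b) (c ⊗ₜ[R] d) = χ α γ • ((a * c) ⊗ₜ[R] (b * d)))
    {β γ : ι} {u v : M ⊗[R] M} (hu : u ∈ tensorGrade 𝒜 β) (hv : v ∈ tensorGrade 𝒜 γ) :
    μ u v ∈ tensorGrade 𝒜 (β + γ) := by
  induction hu using Submodule.span_induction with
  | mem _ hu =>
    obtain ⟨β₁, β₂, u₁, u₂, rfl, hu₁, hu₂, rfl⟩ := hu
    induction hv using Submodule.span_induction with
    | mem _ hv =>
      obtain ⟨γ₁, γ₂, v₁, v₂, rfl, hv₁, hv₂, rfl⟩ := hv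
      rw [hμ β₂ γ₁ u₂ v₁ hu₂ hv₁, add_add_add_comm]
      exact Submodule.smul_mem _ _ <|
        tmul_mem_tensorGrade (SetLike.mul_mem_graded hu₁ hv₁) (SetLike.mul_mem_graded hu₂ hv₂)
    | zero => simp
    | add _ _ _ _ h h' => simpa using add_mem h h'
    | smul r _ _ h => simpa using Submodule.smul_mem _ r h
  | zero => simp
  | add _ _ _ _ h h' => simpa using add_mem h h'
  | smul r _ _ h => simpa using Submodule.smul_mem _ r h

def IsDiagonalBraiding [AddCommMonoid M] [Module R M] (𝒜 : ι → Submodule R M) (χ : ι → ι → R)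
    (s : M ⊗[R] M →ₗ[R] M ⊗[R] M) : Prop :=
  ∀ α γ a b, a ∈ 𝒜 α → b ∈ 𝒜 γ → s (a ⊗ₜ[R] b) = χ α γ • (b ⊗ₜ[R] a)

end TensorGrade

noncomputable def mapMiddle (k V : Type) [CommRing k] [AddCommGroup V] [Module k V]
    (s : V ⊗[k] V →ₗ[k] V ⊗[k] V) : (V ⊗[k] V) ⊗[k] (V ⊗[k] V) →ₗ[k] V ⊗[k] (V ⊗[k] (V ⊗[k] V)) :=
  LinearMap.lTensor V (map12 k V s) ∘ₗ (TensorProduct.assoc k V V (V ⊗[k] V)).toLinearMap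

section Braiding

variable {k V : Type} [CommRing k] [AddCommGroup V] [Module k V]

theorem map12_tmul (s : V ⊗[k] V →ₗ[k] V ⊗[k] V) (a b c : V) :
    map12 k V s (a ⊗ₜ[k] (b ⊗ₜ[k] c)) = TensorProduct.assoc k V V V (s (a ⊗ₜ[k] b) ⊗ₜ[k] c) := by
  simp [map12]

theorem mapFst_tmul (f : V →ₗ[k] V ⊗[k] V) (a b : V) :
    mapFst k V f (a ⊗ₜ[k] b) = TensorProduct.assoc k V V V (f a ⊗ₜ[k] b) := rfl

theorem map12of4_tmul (s : V ⊗[k] V →ₗ[k] V ⊗[k] V) (a b : V) (w : V ⊗[k] V) :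
    map12of4 k V s (a ⊗ₜ[k] (b ⊗ₜ[k] w)) =
      TensorProduct.assoc k V V (V ⊗[k] V) (s (a ⊗ₜ[k] b) ⊗ₜ[k] w) := by
  simp [map12of4]

theorem mapMiddle_tmul (s : V ⊗[k] V →ₗ[k] V ⊗[k] V) (a₁ a₂ b₁ b₂ : V) :
    mapMiddle k V s ((a₁ ⊗ₜ[k] a₂) ⊗ₜ[k] (b₁ ⊗ₜ[k] b₂)) =
      a₁ ⊗ₜ[k] TensorProduct.assoc k V V V (s (a₂ ⊗ₜ[k] b₁) ⊗ₜ[k] b₂) := by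
  simp [mapMiddle, map12_tmul]

variable {n : ℕ} {q : kˣ} {𝒜 : (Fin n → ℕ) → Submodule k V} {σ σinv : V ⊗[k] V →ₗ[k] V ⊗[k] V}

theorem smul_map12of4_tmul_assoc
    (hσ : IsDiagonalBraiding 𝒜 (fun α γ ↦ ((q ^ cpair α γ : kˣ) : k)) σ)
    (hσinv : IsDiagonalBraiding 𝒜 (fun γ α ↦ ((q ^ (-cpair α γ) : kˣ) : k)) σinv)
    {α β : Fin n → ℕ} {b₁ : V} (hb₁ : b₁ ∈ 𝒜 β) (b₂ : V) {w : V ⊗[k] V}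
    (hw : w ∈ tensorGrade 𝒜 α) :
    ((q ^ (-cpair β α) : kˣ) : k) •
        map12of4 k V σ (b₁ ⊗ₜ[k] TensorProduct.assoc k V V V (w ⊗ₜ[k] b₂)) =
      mapMiddle k V σinv (w ⊗ₜ[k] (b₁ ⊗ₜ[k] b₂)) := by
  induction hw using Submodule.span_induction with
  | mem _ hw =>
    obtain ⟨α₁, α₂, a₁, a₂, rfl, ha₁, ha₂, rfl⟩ := hw
    rw [TensorProduct.assoc_tmul, map12of4_tmul, hσ β α₁ b₁ a₁ hb₁ ha₁, mapMiddle_tmul,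
      hσinv α₂ β a₂ b₁ ha₂ hb₁]
    simp only [← smul_tmul', tmul_smul, map_smul, smul_smul, TensorProduct.assoc_tmul]
    rw [← Units.val_mul, ← zpow_add, cpair_add_right]
    ring_nf
  | zero => simp
  | add _ _ _ _ h h' => simp only [add_tmul, tmul_add, map_add, smul_add, h, h']
  | smul r _ _ h =>
    simp only [← smul_tmul', tmul_smul, map_smul]
    rw [smul_comm, h]

theorem smul_map_map_tmul_assoc
    (hσ : IsDiagonalBraiding 𝒜 (fun α γ ↦ ((q ^ cpair α γ : kˣ) : k)) σ)
    (hσinv : IsDiagonalBraiding 𝒜 (fun γ α ↦ ((q ^ (-cpair α γ) : kˣ) : k)) σinv)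
    {α β : Fin n → ℕ} (a₁ : V) {a₂ : V} (ha₂ : a₂ ∈ 𝒜 α) {w : V ⊗[k] V}
    (hw : w ∈ tensorGrade 𝒜 β) :
    ((q ^ (-cpair β α) : kˣ) : k) •
        TensorProduct.map LinearMap.id (TensorProduct.map LinearMap.id σ)
          (a₁ ⊗ₜ[k] TensorProduct.assoc k V V V (w ⊗ₜ[k] a₂)) =
      mapMiddle k V σinv ((a₁ ⊗ₜ[k] a₂) ⊗ₜ[k] w) := by
  induction hw using Submodule.span_induction with
  | mem _ hw =>
    obtain ⟨β₁, β₂, b₁, b₂, rfl, hb₁, hb₂, rfl⟩ := hw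
    rw [TensorProduct.assoc_tmul, map_tmul, map_tmul, hσ β₂ α b₂ a₂ hb₂ ha₂, mapMiddle_tmul,
      hσinv α β₁ a₂ b₁ ha₂ hb₁]
    simp only [← smul_tmul', tmul_smul, map_smul, smul_smul, TensorProduct.assoc_tmul,
      LinearMap.id_coe, id_eq]
    rw [← Units.val_mul, ← zpow_add, cpair_add_left]
    ring_nf
  | zero => simp
  | add _ _ _ _ h h' => simp only [add_tmul, tmul_add, map_add, smul_add, h, h']
  | smul r _ _ h =>
    simp only [← smul_tmul', tmul_smul, map_smul]
    rw [smul_comm, h]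

theorem map12of4_map_mapFst_map12_tmul
    (hσ : IsDiagonalBraiding 𝒜 (fun α γ ↦ ((q ^ cpair α γ : kˣ) : k)) σ)
    (hσinv : IsDiagonalBraiding 𝒜 (fun γ α ↦ ((q ^ (-cpair α γ) : kˣ) : k)) σinv)
    {φ : V →ₗ[k] V ⊗[k] V} {α β : Fin n → ℕ} {a : V} (ha : a ∈ 𝒜 α)
    (hφa : φ a ∈ tensorGrade 𝒜 α) {z : V ⊗[k] V} (hz : z ∈ tensorGrade 𝒜 β) :
    map12of4 k V σ (TensorProduct.map LinearMap.id (mapFst k V φ)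
        (map12 k V σinv (a ⊗ₜ[k] z))) =
      mapMiddle k V σinv (φ a ⊗ₜ[k] z) := by
  induction hz using Submodule.span_induction with
  | mem _ hz =>
    obtain ⟨β₁, β₂, b₁, b₂, -, hb₁, -, rfl⟩ := hz
    rw [map12_tmul, hσinv α β₁ a b₁ ha hb₁, ← smul_tmul', map_smul, TensorProduct.assoc_tmul,
      map_smul, map_tmul, LinearMap.id_coe, id_eq, mapFst_tmul, map_smul,
      smul_map12of4_tmul_assoc hσ hσinv hb₁ b₂ hφa]
  | zero => simp
  | add _ _ _ _ h h' => simp only [tmul_add, map_add, h, h']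
  | smul r _ _ h => simp only [tmul_smul, map_smul, h]

theorem map_map_mapFst_map_assoc
    (hσ : IsDiagonalBraiding 𝒜 (fun α γ ↦ ((q ^ cpair α γ : kˣ) : k)) σ)
    (hσinv : IsDiagonalBraiding 𝒜 (fun γ α ↦ ((q ^ (-cpair α γ) : kˣ) : k)) σinv)
    {φ : V →ₗ[k] V ⊗[k] V} {α β : Fin n → ℕ} {b : V} (hb : b ∈ 𝒜 β)
    (hφb : φ b ∈ tensorGrade 𝒜 β) {y : V ⊗[k] V} (hy : y ∈ tensorGrade 𝒜 α) :
    TensorProduct.map LinearMap.id (TensorProduct.map LinearMap.id σ)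
        (TensorProduct.map LinearMap.id (mapFst k V φ)
          (TensorProduct.map LinearMap.id σinv (TensorProduct.assoc k V V V (y ⊗ₜ[k] b)))) =
      mapMiddle k V σinv (y ⊗ₜ[k] φ b) := by
  induction hy using Submodule.span_induction with
  | mem _ hy =>
    obtain ⟨α₁, α₂, a₁, a₂, -, -, ha₂, rfl⟩ := hy
    rw [TensorProduct.assoc_tmul, map_tmul, hσinv α₂ β a₂ b ha₂ hb, LinearMap.id_coe, id_eq,
      tmul_smul, map_smul, map_tmul, LinearMap.id_coe, id_eq, mapFst_tmul, map_smul,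
      smul_map_map_tmul_assoc hσ hσinv a₁ ha₂ hφb]
  | zero => simp
  | add _ _ _ _ h h' => simp only [add_tmul, map_add, h, h']
  | smul r _ _ h => simp only [← smul_tmul', map_smul, h]

end Braiding

theorem stmt6_general (k U : Type) [CommRing k] (q : kˣ) (n : ℕ)
    [Ring U] [Algebra k U] (x : Fin n → U) (hU : IsUqPlus k q U x)
    (𝒜 : (Fin n → ℕ) → Submodule k U) [GradedAlgebra 𝒜]
    (hx𝒜 : ∀ i : Fin n, x i ∈ 𝒜 (Pi.single i 1))
    (σ σinv : U ⊗[k] U →ₗ[k] U ⊗[k] U)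
    (hσ : ∀ (α γ : Fin n → ℕ) (a b : U), a ∈ 𝒜 α → b ∈ 𝒜 γ →
      σ (a ⊗ₜ[k] b) = ((q ^ cpair α γ : kˣ) : k) • (b ⊗ₜ[k] a))
    (hσinv : ∀ (α γ : Fin n → ℕ) (a b : U), a ∈ 𝒜 α → b ∈ 𝒜 γ →
      σinv (b ⊗ₜ[k] a) = ((q ^ (-cpair α γ) : kˣ) : k) • (a ⊗ₜ[k] b))
    (μ : U ⊗[k] U →ₗ[k] U ⊗[k] U →ₗ[k] U ⊗[k] U)
    (hμ : ∀ (α γ : Fin n → ℕ) (b c : U), b ∈ 𝒜 α → c ∈ 𝒜 γ → ∀ a d : U,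
      μ (a ⊗ₜ[k] b) (c ⊗ₜ[k] d) = ((q ^ cpair α γ : kˣ) : k) • ((a * c) ⊗ₜ[k] (b * d)))
    (φ : U →ₗ[k] U ⊗[k] U)
    (hφ1 : φ 1 = (1 : U) ⊗ₜ[k] (1 : U))
    (hφm : ∀ a b : U, φ (a * b) = μ (φ a) (φ b))
    (hφx : ∀ i : Fin n, φ (x i) = x i ⊗ₜ[k] (1 : U) + (1 : U) ⊗ₜ[k] x i) :
    map12of4 k U σ ∘ₗ TensorProduct.map LinearMap.id (mapFst k U φ) ∘ₗ
        map12 k U σinv ∘ₗ TensorProduct.map LinearMap.id φ =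
      TensorProduct.map LinearMap.id (TensorProduct.map LinearMap.id σ) ∘ₗ
        TensorProduct.map LinearMap.id (mapFst k U φ) ∘ₗ
        TensorProduct.map LinearMap.id σinv ∘ₗ mapFst k U φ := by
  have hσinv' : IsDiagonalBraiding 𝒜 (fun γ α ↦ ((q ^ (-cpair α γ) : kˣ) : k)) σinv :=
    fun γ α b a hb ha ↦ hσinv α γ a b ha hb
  have hφ_mem {α : Fin n → ℕ} {a : U} (ha : a ∈ 𝒜 α) : φ a ∈ tensorGrade 𝒜 α := by
    refine map_mem_of_adjoin_eq_top 𝒜 (tensorGrade 𝒜) φ (μ · ·) (mul_mem_tensorGrade _ hμ)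
      ?_ hφm hU.2.1 ?_ ha
    · simpa [hφ1] using tmul_mem_tensorGrade (SetLike.one_mem_graded 𝒜) (SetLike.one_mem_graded 𝒜)
    · rintro _ ⟨i, rfl⟩
      refine ⟨_, hx𝒜 i, hφx i ▸ add_mem ?_ ?_⟩
      · simpa using tmul_mem_tensorGrade (hx𝒜 i) (SetLike.one_mem_graded 𝒜)
      · simpa using tmul_mem_tensorGrade (SetLike.one_mem_graded 𝒜) (hx𝒜 i)
  refine DirectSum.Decomposition.tensorProduct_ext 𝒜 𝒜 fun α β a b ha hb ↦ ?_
  simp only [LinearMap.comp_apply, TensorProduct.map_tmul, LinearMap.id_coe, id_eq, mapFst_tmul]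
  rw [map12of4_map_mapFst_map12_tmul hσ hσinv' ha (hφ_mem ha) (hφ_mem hb),
    map_map_mapFst_map_assoc hσ hσinv' hb (hφ_mem hb) (hφ_mem ha)]

/-- `σ` and `φ` satisfy the additional condition in the definition of a
braided quantum group:
`(σ ⊗ id ⊗ id)(id ⊗ φ ⊗ id)(σ⁻¹ ⊗ id)(id ⊗ φ) = (id ⊗ id ⊗ σ)(id ⊗ φ ⊗ id)(id ⊗ σ⁻¹)(φ ⊗ id)`
as `k`-linear maps `U ⊗ U → U ⊗ U ⊗ U ⊗ U`. -/
theorem stmt6 (k U : Type) [CommRing k] (q : kˣ) (n : ℕ) (hn : 1 ≤ n)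
    [Ring U] [Algebra k U] (x : Fin n → U) (hU : IsUqPlus k q U x)
    (𝒜 : (Fin n → ℕ) → Submodule k U) [GradedAlgebra 𝒜]
    (hx𝒜 : ∀ i : Fin n, x i ∈ 𝒜 (Pi.single i 1))
    (σ σinv : U ⊗[k] U →ₗ[k] U ⊗[k] U)
    (hσ : ∀ (α γ : Fin n → ℕ) (a b : U), a ∈ 𝒜 α → b ∈ 𝒜 γ →
      σ (a ⊗ₜ[k] b) = ((q ^ cpair α γ : kˣ) : k) • (b ⊗ₜ[k] a))
    (hσinv : ∀ (α γ : Fin n → ℕ) (a b : U), a ∈ 𝒜 α → b ∈ 𝒜 γ →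
      σinv (b ⊗ₜ[k] a) = ((q ^ (-cpair α γ) : kˣ) : k) • (a ⊗ₜ[k] b))
    (hinv₁ : σinv ∘ₗ σ = LinearMap.id) (hinv₂ : σ ∘ₗ σinv = LinearMap.id)
    (μ : U ⊗[k] U →ₗ[k] U ⊗[k] U →ₗ[k] U ⊗[k] U)
    (hμ : ∀ (α γ : Fin n → ℕ) (b c : U), b ∈ 𝒜 α → c ∈ 𝒜 γ → ∀ a d : U,
      μ (a ⊗ₜ[k] b) (c ⊗ₜ[k] d) = ((q ^ cpair α γ : kˣ) : k) • ((a * c) ⊗ₜ[k] (b * d)))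
    (φ : U →ₗ[k] U ⊗[k] U)
    (hφ1 : φ 1 = (1 : U) ⊗ₜ[k] (1 : U))
    (hφm : ∀ a b : U, φ (a * b) = μ (φ a) (φ b))
    (hφx : ∀ i : Fin n, φ (x i) = x i ⊗ₜ[k] (1 : U) + (1 : U) ⊗ₜ[k] x i) :
    map12of4 k U σ ∘ₗ TensorProduct.map LinearMap.id (mapFst k U φ) ∘ₗ
        map12 k U σinv ∘ₗ TensorProduct.map LinearMap.id φ =
      TensorProduct.map LinearMap.id (TensorProduct.map LinearMap.id σ) ∘ₗ
        TensorProduct.map LinearMap.id (mapFst k U φ) ∘ₗ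
        TensorProduct.map LinearMap.id σinv ∘ₗ mapFst k U φ :=
  stmt6_general k U q n x hU 𝒜 hx𝒜 σ σinv hσ hσinv μ hμ φ hφ1 hφm hφx
end

section
/- For every u ≥ 1, all indices j_1, …, j_u ∈ {1, …, n}, and all positive integers n_1, …, n_u, one has m((id ⊗ κ)(φ(x_{j_1}^{n_1} ⋯ x_{j_u}^{n_u}))) = 0 in U, where m : U ⊗_k U → U is the multiplication map of U. -/
/-!
`m ∘ (id ⊗ κ)` kills every right multiple `t · φ(y)` of a primitive element `y`: on `a ⊗ b` with
`b` homogeneous, the two terms of `(a ⊗ b) · (y ⊗ 1 + 1 ⊗ y)` are `ε(β,γ) a y ⊗ b` and `a ⊗ b y`,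
and the twisted anti-multiplicativity `κ(b y) = ε(β,γ) κ(y) κ(b) = -ε(β,γ) y κ(b)` makes their
images under `m ∘ (id ⊗ κ)` cancel. Every monomial `x_{j_1}^{n_1} ⋯ x_{j_u}^{n_u}` with `u, n_u ≥ 1`
ends in a generator `x_{j_u}`, and `φ(x_{j_u})` is primitive.
-/

open scoped TensorProduct

theorem cpair_zero_right {n : ℕ} (α : Fin n → ℕ) : cpair α 0 = 0 := by
  simp [cpair]

theorem exists_prod_ofFn_pow_eq_mul_last {M : Type*} [Monoid M] {u : ℕ} (f : Fin (u + 1) → M)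
    (ns : Fin (u + 1) → ℕ) (hns : 1 ≤ ns (Fin.last u)) :
    ∃ a, (List.ofFn fun i => f i ^ ns i).prod = a * f (Fin.last u) := by
  obtain ⟨e, he⟩ := Nat.exists_eq_add_of_le' hns
  rw [List.ofFn_succ', List.prod_concat, he, pow_succ, ← mul_assoc]
  exact ⟨_, rfl⟩

section TwistedTensorProduct

variable {k U ι : Type*} [CommRing k] [Ring U] [Algebra k U] (𝒜 : ι → Submodule k U)
  {ε : ι → ι → k} {μ : U ⊗[k] U →ₗ[k] U ⊗[k] U →ₗ[k] U ⊗[k] U} {κ : U →ₗ[k] U}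

theorem mul'_map_id_twistedMul_primitive_tmul [Zero ι] [SetLike.GradedOne 𝒜]
    (hε : ∀ β, ε β 0 = 1)
    (hμ : ∀ (α γ : ι) (b c : U), b ∈ 𝒜 α → c ∈ 𝒜 γ → ∀ a d : U,
      μ (a ⊗ₜ[k] b) (c ⊗ₜ[k] d) = ε α γ • ((a * c) ⊗ₜ[k] (b * d)))
    (hκm : ∀ (α β : ι) (a b : U), a ∈ 𝒜 α → b ∈ 𝒜 β → κ (a * b) = ε α β • (κ b * κ a))
    {γ : ι} {y : U} (hy : y ∈ 𝒜 γ) (hκy : κ y = -y) {β : ι} {b : U} (hb : b ∈ 𝒜 β) (a : U) :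
    LinearMap.mul' k U (TensorProduct.map LinearMap.id κ
      (μ (a ⊗ₜ[k] b) (y ⊗ₜ[k] 1 + 1 ⊗ₜ[k] y))) = 0 := by
  rw [map_add, hμ β γ b y hb hy, hμ β 0 b 1 hb SetLike.GradedOne.one_mem, hε, one_smul]
  simp [hκm β γ b y hb hy, hκy, mul_assoc]

theorem mul'_map_id_twistedMul_primitive [DecidableEq ι] [AddMonoid ι] [GradedAlgebra 𝒜]
    (hε : ∀ β, ε β 0 = 1)
    (hμ : ∀ (α γ : ι) (b c : U), b ∈ 𝒜 α → c ∈ 𝒜 γ → ∀ a d : U,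
      μ (a ⊗ₜ[k] b) (c ⊗ₜ[k] d) = ε α γ • ((a * c) ⊗ₜ[k] (b * d)))
    (hκm : ∀ (α β : ι) (a b : U), a ∈ 𝒜 α → b ∈ 𝒜 β → κ (a * b) = ε α β • (κ b * κ a))
    {γ : ι} {y : U} (hy : y ∈ 𝒜 γ) (hκy : κ y = -y) (t : U ⊗[k] U) :
    LinearMap.mul' k U (TensorProduct.map LinearMap.id κ (μ t (y ⊗ₜ[k] 1 + 1 ⊗ₜ[k] y))) = 0 := by
  suffices h : LinearMap.mul' k U ∘ₗ TensorProduct.map LinearMap.id κ ∘ₗ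
      μ.flip (y ⊗ₜ[k] 1 + 1 ⊗ₜ[k] y) = 0 from LinearMap.congr_fun h t
  refine TensorProduct.ext' fun a b => ?_
  induction b using DirectSum.Decomposition.inductionOn 𝒜 with
  | zero => simp
  | homogeneous b =>
    exact mul'_map_id_twistedMul_primitive_tmul 𝒜 hε hμ hκm hy hκy b.2 a
  | add b b' hb hb' =>
    simp only [LinearMap.zero_apply, TensorProduct.tmul_add, map_add] at hb hb' ⊢
    rw [hb, hb', add_zero]

end TwistedTensorProduct

theorem stmt12_general (k U : Type) [CommRing k] (q : kˣ) (n : ℕ)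
    [Ring U] [Algebra k U] (x : Fin n → U)
    (𝒜 : (Fin n → ℕ) → Submodule k U) [GradedAlgebra 𝒜]
    (hx𝒜 : ∀ i : Fin n, x i ∈ 𝒜 (Pi.single i 1))
    (μ : U ⊗[k] U →ₗ[k] U ⊗[k] U →ₗ[k] U ⊗[k] U)
    (hμ : ∀ (α γ : Fin n → ℕ) (b c : U), b ∈ 𝒜 α → c ∈ 𝒜 γ → ∀ a d : U,
      μ (a ⊗ₜ[k] b) (c ⊗ₜ[k] d) = ((q ^ cpair α γ : kˣ) : k) • ((a * c) ⊗ₜ[k] (b * d)))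
    (φ : U →ₗ[k] U ⊗[k] U)
    (hφm : ∀ a b : U, φ (a * b) = μ (φ a) (φ b))
    (hφx : ∀ i : Fin n, φ (x i) = x i ⊗ₜ[k] (1 : U) + (1 : U) ⊗ₜ[k] x i)
    (κ : U →ₗ[k] U)
    (hκx : ∀ i : Fin n, κ (x i) = -x i)
    (hκm : ∀ (α β : Fin n → ℕ) (a b : U), a ∈ 𝒜 α → b ∈ 𝒜 β →
      κ (a * b) = ((q ^ cpair α β : kˣ) : k) • (κ b * κ a)) :
    ∀ (u : ℕ), 1 ≤ u → ∀ (js : Fin u → Fin n) (ns : Fin u → ℕ), (∀ a, 1 ≤ ns a) →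
      LinearMap.mul' k U
        (TensorProduct.map LinearMap.id κ
          (φ (List.ofFn (fun a : Fin u => x (js a) ^ ns a)).prod)) = 0 := by
  intro u hu js ns hns
  obtain ⟨m, rfl⟩ := Nat.exists_eq_add_of_le' hu
  obtain ⟨a, ha⟩ := exists_prod_ofFn_pow_eq_mul_last (fun i => x (js i)) ns (hns _)
  rw [ha, hφm, hφx]
  refine mul'_map_id_twistedMul_primitive 𝒜 (fun β => ?_) hμ hκm (hx𝒜 _) (hκx _) _
  rw [cpair_zero_right, zpow_zero, Units.val_one]

/-- for every `u ≥ 1`, all indices `j_1, …, j_u ∈ {1, …, n}` and all positive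
integers `n_1, …, n_u`, one has `m((id ⊗ κ)(φ(x_{j_1}^{n_1} ⋯ x_{j_u}^{n_u}))) = 0` in `U`,
where `m` is the multiplication map of `U`, `φ : U → U ⊗_σ U` the algebra homomorphism with
`φ(x_i) = x_i ⊗ 1 + 1 ⊗ x_i`, and `κ` the twisted antihomomorphism with `κ(x_i) = −x_i`. -/
theorem stmt12 (k U : Type) [CommRing k] (q : kˣ) (n : ℕ) (hn : 1 ≤ n)
    [Ring U] [Algebra k U] (x : Fin n → U) (hU : IsUqPlus k q U x)
    (𝒜 : (Fin n → ℕ) → Submodule k U) [GradedAlgebra 𝒜]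
    (hx𝒜 : ∀ i : Fin n, x i ∈ 𝒜 (Pi.single i 1))
    (μ : U ⊗[k] U →ₗ[k] U ⊗[k] U →ₗ[k] U ⊗[k] U)
    (hμ : ∀ (α γ : Fin n → ℕ) (b c : U), b ∈ 𝒜 α → c ∈ 𝒜 γ → ∀ a d : U,
      μ (a ⊗ₜ[k] b) (c ⊗ₜ[k] d) = ((q ^ cpair α γ : kˣ) : k) • ((a * c) ⊗ₜ[k] (b * d)))
    (φ : U →ₗ[k] U ⊗[k] U)
    (hφ1 : φ 1 = (1 : U) ⊗ₜ[k] (1 : U))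
    (hφm : ∀ a b : U, φ (a * b) = μ (φ a) (φ b))
    (hφx : ∀ i : Fin n, φ (x i) = x i ⊗ₜ[k] (1 : U) + (1 : U) ⊗ₜ[k] x i)
    (κ : U →ₗ[k] U)
    (hκ1 : κ 1 = 1)
    (hκx : ∀ i : Fin n, κ (x i) = -x i)
    (hκm : ∀ (α β : Fin n → ℕ) (a b : U), a ∈ 𝒜 α → b ∈ 𝒜 β →
      κ (a * b) = ((q ^ cpair α β : kˣ) : k) • (κ b * κ a)) :
    ∀ (u : ℕ), 1 ≤ u → ∀ (js : Fin u → Fin n) (ns : Fin u → ℕ), (∀ a, 1 ≤ ns a) →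
      LinearMap.mul' k U
        (TensorProduct.map LinearMap.id κ
          (φ (List.ofFn (fun a : Fin u => x (js a) ^ ns a)).prod)) = 0 :=
  stmt12_general k U q n x 𝒜 hx𝒜 μ hμ φ hφm hφx κ hκx hκm
end
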